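/- arXiv:1112.6031 — 3 statements merged into one kernel-verified Lean document; each statement's English description precedes it below -/
import Mathlib

section
/- Let α, β be real with 0 < α < β < 1, let 0 < a < b < ∞, ρ > 0, and let f be continuous on [a, b]. Then for every x with a < x < b, (ρD^α_{a+} (ρI^β_{a+} f))(x) = (ρI^{β-α}_{a+} f)(x); that is, the generalized fractional derivative of order α of the generalized fractional integral of order β of f equals the generalized fractional integral of order β - α of f. -/
/-!
The substitution `u = τ ^ ρ` turns `ρI^μ_{a+} f (z)` into `ρ ^ (-μ)` times the Riemann–Liouville
integral `I^μ_{a^ρ+}` of `u ↦ f (u ^ (1/ρ))`, evaluated at `z ^ ρ`. By Fubini's theorem on the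
triangle `c < s ≤ u ≤ y` and the Beta integral, Riemann–Liouville integrals form a semigroup, hence
so do the Katugampola integrals: `ρI^{1-α} ρI^β f = ρI^{1+(β-α)} f = ρI^1 ρI^{β-α} f`. As
`ρI^{β-α} f` is continuous, the fundamental theorem of calculus gives
`(d/dx) ρI^1 g (x) = x^{ρ-1} g x`, and the factor `x^{1-ρ}` in `ρD^α` cancels `x^{ρ-1}`.
A function continuous on `[a, b]` is first extended continuously to `ℝ`; for `a < x < b` this
changes neither side.
-/

open MeasureTheory Filter Real Topology Set
open scoped Interval

noncomputable def genFracIntegral (ρ α a : ℝ) (f : ℝ → ℝ) (x : ℝ) : ℝ :=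
  (ρ ^ (1 - α) / Real.Gamma α) *
    ∫ τ in a..x, τ ^ (ρ - 1) * (x ^ ρ - τ ^ ρ) ^ (α - 1) * f τ

noncomputable def genFracDeriv (ρ α a : ℝ) (f : ℝ → ℝ) (x : ℝ) : ℝ :=
  x ^ (1 - ρ) * deriv (genFracIntegral ρ (1 - α) a f) x

theorem integral_rpow_mul_one_sub_rpow {u v : ℝ} (hu : 0 < u) (hv : 0 < v) :
    ∫ t in (0 : ℝ)..1, t ^ (u - 1) * (1 - t) ^ (v - 1) = Gamma u * Gamma v / Gamma (u + v) := by
  have hβ : Complex.betaIntegral u v = ↑(∫ t in (0 : ℝ)..1, t ^ (u - 1) * (1 - t) ^ (v - 1)) := by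
    rw [Complex.betaIntegral, ← intervalIntegral.integral_ofReal]
    refine intervalIntegral.integral_congr fun t ht => ?_
    rw [uIcc_of_le zero_le_one] at ht
    simp only [Complex.ofReal_mul, Complex.ofReal_cpow ht.1,
      Complex.ofReal_cpow (sub_nonneg.2 ht.2), Complex.ofReal_sub, Complex.ofReal_one]
  have := ProbabilityTheory.beta_eq_betaIntegralReal u v hu hv
  rwa [hβ, Complex.ofReal_re, ProbabilityTheory.beta, eq_comm] at this

theorem intervalIntegrable_sub_rpow {r : ℝ} (hr : -1 < r) (d a b : ℝ) :
    IntervalIntegrable (fun s => (d - s) ^ r) volume a b := by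
  simpa using
    (intervalIntegral.intervalIntegrable_rpow' hr (a := d - a) (b := d - b)).comp_sub_left d

theorem integral_sub_rpow_sub_one {δ : ℝ} (hδ : 0 < δ) (c y : ℝ) :
    ∫ u in c..y, (y - u) ^ (δ - 1) = (y - c) ^ δ / δ := by
  rw [intervalIntegral.integral_comp_sub_left (fun t => t ^ (δ - 1)), sub_self,
    integral_rpow (Or.inl (by linarith)), sub_add_cancel, zero_rpow hδ.ne']
  ring

theorem integral_sub_rpow_mul_eq_rpow_mul {δ c y : ℝ} (hδ : δ ≠ 0) (hcy : c ≤ y) (G : ℝ → ℝ) :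
    ∫ u in c..y, (y - u) ^ (δ - 1) * G u =
      (y - c) ^ δ * ∫ t in (0 : ℝ)..1, (1 - t) ^ (δ - 1) * G ((y - c) * t + c) := by
  have h := intervalIntegral.smul_integral_comp_mul_add (a := 0) (b := 1)
    (fun u : ℝ => (y - u) ^ (δ - 1) * G u) (y - c) c
  simp only [mul_zero, zero_add, mul_one, sub_add_cancel, smul_eq_mul] at h
  have hpow : (y - c) ^ δ = (y - c) * (y - c) ^ (δ - 1) := by
    rw [← rpow_one_add' (sub_nonneg.2 hcy) (by simpa using hδ), add_sub_cancel]
  rw [← h, hpow, mul_assoc]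
  congr 1
  rw [← intervalIntegral.integral_const_mul]
  refine intervalIntegral.integral_congr fun t ht => ?_
  rw [uIcc_of_le zero_le_one] at ht
  rw [show y - ((y - c) * t + c) = (y - c) * (1 - t) by ring,
    mul_rpow (sub_nonneg.2 hcy) (sub_nonneg.2 ht.2)]
  ring

theorem integral_sub_rpow_mul_sub_rpow {μ ν s y : ℝ} (hμ : 0 < μ) (hν : 0 < ν) (hsy : s < y) :
    ∫ u in s..y, (y - u) ^ (μ - 1) * (u - s) ^ (ν - 1) =
      (y - s) ^ (μ + ν - 1) * (Gamma μ * Gamma ν / Gamma (μ + ν)) := by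
  rw [integral_sub_rpow_mul_eq_rpow_mul hμ.ne' hsy.le, mul_comm (Gamma μ), add_comm μ ν,
    ← integral_rpow_mul_one_sub_rpow hν hμ, ← intervalIntegral.integral_const_mul,
    ← intervalIntegral.integral_const_mul]
  refine intervalIntegral.integral_congr fun t ht => ?_
  rw [uIcc_of_le zero_le_one] at ht
  rw [add_sub_cancel_right, mul_rpow (sub_pos.2 hsy).le ht.1,
    show ν + μ - 1 = μ + (ν - 1) by ring, rpow_add (sub_pos.2 hsy)]
  ring

theorem continuous_intervalIntegral_mul {k : ℝ → ℝ} {H : ℝ → ℝ → ℝ} {a b : ℝ}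
    (hk : IntervalIntegrable k volume a b) (hH : Continuous (Function.uncurry H)) :
    Continuous fun y => ∫ t in a..b, k t * H y t := by
  refine continuous_iff_continuousAt.2 fun y₀ => ?_
  obtain ⟨M, hM⟩ := ((isCompact_closedBall y₀ 1).prod isCompact_uIcc).exists_bound_of_continuousOn
    hH.continuousOn
  have hHy : ∀ t, Continuous fun y => H y t :=
    fun t => hH.comp (continuous_id.prodMk continuous_const)
  refine intervalIntegral.continuousAt_of_dominated_interval (bound := fun t => ‖k t‖ * M)
    (Eventually.of_forall fun y => hk.def'.aestronglyMeasurable.mul ?_) ?_ (hk.norm.mul_const M)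
    (Eventually.of_forall fun t _ => continuousAt_const.mul (hHy t).continuousAt)
  · exact (hH.comp (continuous_const.prodMk continuous_id)).aestronglyMeasurable
  · filter_upwards [Metric.closedBall_mem_nhds y₀ one_pos] with y hy
    refine Eventually.of_forall fun t ht => ?_
    rw [norm_mul]
    exact mul_le_mul_of_nonneg_left (hM (y, t) ⟨hy, uIoc_subset_uIcc ht⟩) (norm_nonneg _)

def triangle (c y : ℝ) : Set (ℝ × ℝ) := {p | c < p.2 ∧ p.2 ≤ p.1 ∧ p.1 ≤ y}

theorem measurableSet_triangle (c y : ℝ) : MeasurableSet (triangle c y) :=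
  (measurableSet_lt measurable_const measurable_snd).inter
    ((measurableSet_le measurable_snd measurable_fst).inter
      (measurableSet_le measurable_fst measurable_const))

theorem triangle_indicator_apply (c y : ℝ) (k : ℝ → ℝ → ℝ) (u s : ℝ) :
    (triangle c y).indicator (Function.uncurry k) (u, s) =
      (Ioc c y).indicator (fun u => (Ioc c u).indicator (k u)) u s := by
  by_cases hu : u ∈ Ioc c y
  · simp only [triangle, indicator_of_mem hu, indicator_apply, mem_ofPred_eq, mem_Ioc, hu.2,
      and_true, Function.uncurry_apply_pair]
  · rw [indicator_of_notMem hu, indicator_of_notMem fun hp => hu ⟨hp.1.trans_le hp.2.1, hp.2.2⟩]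
    rfl

theorem integral_integral_swap_triangle {K : ℝ → ℝ → ℝ} {c y : ℝ} (hcy : c ≤ y)
    (hK : IntegrableOn (Function.uncurry K) (triangle c y)) :
    ∫ u in c..y, ∫ s in c..u, K u s = ∫ s in c..y, ∫ u in s..y, K u s := by
  set F : ℝ → ℝ → ℝ := fun u s => {s | s ≤ u}.indicator (K u) s
  have hT : MeasurableSet {p : ℝ × ℝ | p.2 ≤ p.1} := measurableSet_le measurable_snd measurable_fst
  have hF : IntegrableOn (Function.uncurry F) (uIoc c y ×ˢ uIoc c y) := by
    have : Function.uncurry F = {p : ℝ × ℝ | p.2 ≤ p.1}.indicator (Function.uncurry K) := by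
      ext ⟨u, s⟩; simp [F, indicator]
    rw [this, IntegrableOn, integrable_indicator_iff hT, IntegrableOn, Measure.restrict_restrict hT]
    refine hK.mono_set fun p hp => ?_
    simp only [uIoc_of_le hcy, mem_inter_iff, mem_prod, mem_Ioc, mem_ofPred_eq] at hp
    exact ⟨hp.2.2.1, hp.1, hp.2.1.2⟩
  have hlhs : ∀ u ∈ uIcc c y, ∫ s in c..y, F u s = ∫ s in c..u, K u s := fun u hu =>
    intervalIntegral.integral_indicator (by rwa [uIcc_of_le hcy] at hu)
  have hrhs : ∀ᵐ s, s ∈ Ι c y → ∫ u in c..y, F u s = ∫ u in s..y, K u s := by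
    refine Eventually.of_forall fun s hs => ?_
    rw [uIoc_of_le hcy] at hs
    have : (fun u => F u s) = (Ici s).indicator (fun u => K u s) := by
      ext u; simp [F, indicator]
    have hset : Ici s ∩ Ioc c y = Icc s y :=
      Set.ext fun u => ⟨fun h => ⟨h.1, h.2.2⟩, fun h => ⟨h.1, hs.1.trans_le h.1, h.2⟩⟩
    rw [this, intervalIntegral.integral_of_le hcy, intervalIntegral.integral_of_le hs.2,
      integral_indicator measurableSet_Ici, Measure.restrict_restrict measurableSet_Ici,
      hset, integral_Icc_eq_integral_Ioc]
  rw [← intervalIntegral.integral_congr hlhs, intervalIntegral_intervalIntegral_swap hF,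
    intervalIntegral.integral_congr_ae hrhs]

theorem integrableOn_triangle_sub_rpow_mul_sub_rpow {μ ν c y : ℝ} (hμ : 0 < μ) (hν : 0 < ν) :
    IntegrableOn (fun p : ℝ × ℝ => (y - p.1) ^ (μ - 1) * (p.1 - p.2) ^ (ν - 1))
      (triangle c y) := by
  set k : ℝ → ℝ → ℝ := fun u s => (y - u) ^ (μ - 1) * (u - s) ^ (ν - 1)
  have hslice := triangle_indicator_apply c y k
  have hsliceInt : ∀ u ∈ Ioc c y, IntegrableOn (k u) (Ioc c u) :=
    fun u hu => (intervalIntegrable_iff_integrableOn_Ioc_of_le hu.1.le).1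
      ((intervalIntegrable_sub_rpow (by linarith) u c u).const_mul _)
  have hsliceNorm : (fun u => ∫ s, ‖(triangle c y).indicator (Function.uncurry k) (u, s)‖)
      = (Ioc c y).indicator (fun u => (y - u) ^ (μ - 1) * ((u - c) ^ ν / ν)) := by
    ext u
    simp_rw [hslice]
    by_cases hu : u ∈ Ioc c y
    · have hk : ∀ s ∈ Ioc c u, ‖k u s‖ = k u s := fun s hs =>
        norm_of_nonneg (mul_nonneg (rpow_nonneg (by linarith [hu.2]) _)
          (rpow_nonneg (by linarith [hs.2]) _))
      simp_rw [indicator_of_mem hu, norm_indicator_eq_indicator_norm]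
      rw [integral_indicator measurableSet_Ioc, setIntegral_congr_fun measurableSet_Ioc hk,
        ← intervalIntegral.integral_of_le hu.1.le, intervalIntegral.integral_const_mul,
        integral_sub_rpow_sub_one hν]
    · simp [indicator_of_notMem hu]
  have hcont : Continuous fun u => (u - c) ^ ν / ν :=
    ((continuous_sub_right c).rpow_const fun _ => Or.inr hν.le).div_const ν
  have hmeas := ((by fun_prop : Measurable (Function.uncurry k)).indicator
    (measurableSet_triangle c y)).aestronglyMeasurable (μ := volume.prod volume)
  change IntegrableOn (Function.uncurry k) (triangle c y)
  rw [← integrable_indicator_iff (measurableSet_triangle c y), Measure.volume_eq_prod,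
    integrable_prod_iff hmeas, hsliceNorm]
  refine ⟨Eventually.of_forall fun u => ?_, IntegrableOn.integrable_indicator ?_ measurableSet_Ioc⟩
  · simp_rw [hslice u]
    by_cases hu : u ∈ Ioc c y
    · simpa [indicator_of_mem hu] using (hsliceInt u hu).integrable_indicator measurableSet_Ioc
    · simp [indicator_of_notMem hu]
  · exact ((intervalIntegrable_sub_rpow (by linarith) y c y).mul_continuousOn
      hcont.continuousOn).def'.mono_set Ioc_subset_uIoc

noncomputable def riemannLiouvilleIntegral (μ c : ℝ) (g : ℝ → ℝ) (y : ℝ) : ℝ :=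
  (Gamma μ)⁻¹ * ∫ u in c..y, (y - u) ^ (μ - 1) * g u

theorem riemannLiouvilleIntegral_congr {μ c y : ℝ} {g₁ g₂ : ℝ → ℝ} (h : EqOn g₁ g₂ (uIcc c y)) :
    riemannLiouvilleIntegral μ c g₁ y = riemannLiouvilleIntegral μ c g₂ y := by
  simp only [riemannLiouvilleIntegral]
  congr 1
  exact intervalIntegral.integral_congr fun u hu => congrArg _ (h hu)

theorem riemannLiouvilleIntegral_const_mul (μ c r : ℝ) (g : ℝ → ℝ) (y : ℝ) :
    riemannLiouvilleIntegral μ c (fun u => r * g u) y = r * riemannLiouvilleIntegral μ c g y := by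
  simp only [riemannLiouvilleIntegral, mul_left_comm _ r, intervalIntegral.integral_const_mul]

/-- After rescaling `[c, y]` to `[0, 1]` the singularity of the kernel sits at the fixed point
`t = 1`, so dominated convergence applies. -/
theorem continuousOn_riemannLiouvilleIntegral {μ : ℝ} (hμ : 0 < μ) (c : ℝ) {g : ℝ → ℝ}
    (hg : Continuous g) : ContinuousOn (riemannLiouvilleIntegral μ c g) (Ici c) := by
  have hcont : Continuous fun y => (Gamma μ)⁻¹ *
      ((y - c) ^ μ * ∫ t in (0 : ℝ)..1, (1 - t) ^ (μ - 1) * g ((y - c) * t + c)) :=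
    continuous_const.mul (((continuous_sub_right c).rpow_const fun _ => Or.inr hμ.le).mul
      (continuous_intervalIntegral_mul (intervalIntegrable_sub_rpow (by linarith) 1 0 1)
        (hg.comp (by fun_prop))))
  refine hcont.continuousOn.congr fun y hy => ?_
  rw [riemannLiouvilleIntegral, integral_sub_rpow_mul_eq_rpow_mul hμ.ne' hy]

theorem riemannLiouvilleIntegral_riemannLiouvilleIntegral {μ ν c y : ℝ} (hμ : 0 < μ)
    (hν : 0 < ν) {g : ℝ → ℝ} (hg : Continuous g) (hcy : c ≤ y) :
    riemannLiouvilleIntegral μ c (riemannLiouvilleIntegral ν c g) y =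
      riemannLiouvilleIntegral (μ + ν) c g y := by
  obtain ⟨M, hM⟩ := isCompact_Icc.exists_bound_of_continuousOn (hg.continuousOn (s := Icc c y))
  have hK : IntegrableOn (fun p : ℝ × ℝ => (y - p.1) ^ (μ - 1) * ((p.1 - p.2) ^ (ν - 1) * g p.2))
      (triangle c y) := by
    simp_rw [← mul_assoc]
    exact (integrableOn_triangle_sub_rpow_mul_sub_rpow hμ hν).mul_bdd
      (hg.comp continuous_snd).aestronglyMeasurable
      (ae_restrict_of_forall_mem (measurableSet_triangle c y)
        fun p hp => hM p.2 ⟨hp.1.le, hp.2.1.trans hp.2.2⟩)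
  have hpull : ∫ u in c..y, (y - u) ^ (μ - 1) *
        ((Gamma ν)⁻¹ * ∫ s in c..u, (u - s) ^ (ν - 1) * g s) =
      (Gamma ν)⁻¹ * ∫ u in c..y, ∫ s in c..u, (y - u) ^ (μ - 1) * ((u - s) ^ (ν - 1) * g s) := by
    rw [← intervalIntegral.integral_const_mul]
    congr 1 with u
    rw [intervalIntegral.integral_const_mul]
    ring
  have hbeta : ∫ s in c..y, ∫ u in s..y, (y - u) ^ (μ - 1) * ((u - s) ^ (ν - 1) * g s) =
      Gamma μ * Gamma ν / Gamma (μ + ν) * ∫ s in c..y, (y - s) ^ (μ + ν - 1) * g s := by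
    rw [← intervalIntegral.integral_const_mul, intervalIntegral.integral_of_le hcy,
      intervalIntegral.integral_of_le hcy, integral_Ioc_eq_integral_Ioo,
      integral_Ioc_eq_integral_Ioo]
    refine setIntegral_congr_fun measurableSet_Ioo fun s hs => ?_
    simp_rw [← mul_assoc]
    rw [intervalIntegral.integral_mul_const, integral_sub_rpow_mul_sub_rpow hμ hν hs.2]
    ring
  simp only [riemannLiouvilleIntegral]
  rw [hpull, integral_integral_swap_triangle (K := fun u s => (y - u) ^ (μ - 1) *
    ((u - s) ^ (ν - 1) * g s)) hcy hK, hbeta]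
  have := (Gamma_pos_of_pos hμ).ne'
  have := (Gamma_pos_of_pos hν).ne'
  field_simp

theorem genFracIntegral_congr {ρ μ a z : ℝ} {f₁ f₂ : ℝ → ℝ} (h : EqOn f₁ f₂ (uIcc a z)) :
    genFracIntegral ρ μ a f₁ z = genFracIntegral ρ μ a f₂ z := by
  simp only [genFracIntegral]
  congr 1
  exact intervalIntegral.integral_congr fun τ hτ => congrArg _ (h hτ)

theorem genFracIntegral_eq_riemannLiouvilleIntegral {ρ μ a z : ℝ} (hρ : 0 < ρ) (ha : 0 ≤ a)
    (haz : a ≤ z) (f : ℝ → ℝ) :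
    genFracIntegral ρ μ a f z =
      ρ ^ (-μ) * riemannLiouvilleIntegral μ (a ^ ρ) (fun u => f (u ^ ρ⁻¹)) (z ^ ρ) := by
  have hsub := intervalIntegral.integral_comp_mul_deriv_of_deriv_nonneg (a := a) (b := z)
    (f := fun τ => τ ^ ρ) (f' := fun τ => ρ * τ ^ (ρ - 1))
    (g := fun u => (z ^ ρ - u) ^ (μ - 1) * f (u ^ ρ⁻¹))
    (continuous_id.rpow_const fun _ => Or.inr hρ.le).continuousOn
    (fun τ hτ => hasDerivAt_rpow_const (Or.inl (ha.trans_lt (min_eq_left haz ▸ hτ.1)).ne'))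
    (fun τ hτ => by have := ha.trans_lt (min_eq_left haz ▸ hτ.1); positivity)
  rw [genFracIntegral, riemannLiouvilleIntegral, ← hsub, ← intervalIntegral.integral_const_mul,
    ← intervalIntegral.integral_const_mul, ← intervalIntegral.integral_const_mul]
  refine intervalIntegral.integral_congr fun τ hτ => ?_
  rw [uIcc_of_le haz] at hτ
  simp only [Function.comp_apply, rpow_rpow_inv (ha.trans hτ.1) hρ.ne']
  rw [show 1 - μ = -μ + 1 by ring, rpow_add hρ, rpow_one]
  ring

theorem genFracIntegral_genFracIntegral {ρ μ ν a z : ℝ} (hρ : 0 < ρ) (ha : 0 ≤ a) (hμ : 0 < μ)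
    (hν : 0 < ν) {f : ℝ → ℝ} (hf : Continuous f) (haz : a ≤ z) :
    genFracIntegral ρ μ a (genFracIntegral ρ ν a f) z = genFracIntegral ρ (μ + ν) a f z := by
  have hg : Continuous fun u => f (u ^ ρ⁻¹) :=
    hf.comp (continuous_id.rpow_const fun _ => Or.inr (inv_nonneg.2 hρ.le))
  have hpow : a ^ ρ ≤ z ^ ρ := rpow_le_rpow ha haz hρ.le
  have hinner : EqOn (fun u => genFracIntegral ρ ν a f (u ^ ρ⁻¹))
      (fun u => ρ ^ (-ν) * riemannLiouvilleIntegral ν (a ^ ρ) (fun u => f (u ^ ρ⁻¹)) u)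
      (uIcc (a ^ ρ) (z ^ ρ)) := fun u hu => by
    rw [uIcc_of_le hpow] at hu
    have hu0 : 0 ≤ u := (rpow_nonneg ha ρ).trans hu.1
    dsimp only
    rw [genFracIntegral_eq_riemannLiouvilleIntegral hρ ha
      ((le_rpow_inv_iff_of_pos ha hu0 hρ).2 hu.1), rpow_inv_rpow hu0 hρ.ne']
  rw [genFracIntegral_eq_riemannLiouvilleIntegral hρ ha haz,
    genFracIntegral_eq_riemannLiouvilleIntegral hρ ha haz, riemannLiouvilleIntegral_congr hinner,
    riemannLiouvilleIntegral_const_mul,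
    riemannLiouvilleIntegral_riemannLiouvilleIntegral hμ hν hg hpow, ← mul_assoc, ← rpow_add hρ,
    neg_add]

theorem continuousOn_genFracIntegral {ρ μ a : ℝ} (hρ : 0 < ρ) (ha : 0 ≤ a) (hμ : 0 < μ)
    {f : ℝ → ℝ} (hf : Continuous f) : ContinuousOn (genFracIntegral ρ μ a f) (Ici a) := by
  have hg : Continuous fun u => f (u ^ ρ⁻¹) :=
    hf.comp (continuous_id.rpow_const fun _ => Or.inr (inv_nonneg.2 hρ.le))
  have hcont : ContinuousOn (fun z =>
      ρ ^ (-μ) * riemannLiouvilleIntegral μ (a ^ ρ) (fun u => f (u ^ ρ⁻¹)) (z ^ ρ)) (Ici a) :=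
    continuousOn_const.mul ((continuousOn_riemannLiouvilleIntegral hμ (a ^ ρ) hg).comp
      (continuous_id.rpow_const fun _ => Or.inr hρ.le).continuousOn
      fun z hz => rpow_le_rpow ha hz hρ.le)
  exact hcont.congr fun z hz => genFracIntegral_eq_riemannLiouvilleIntegral hρ ha hz f

theorem hasDerivAt_genFracIntegral_one {ρ a x : ℝ} (ha : 0 < a) {h : ℝ → ℝ}
    (hh : ContinuousOn h (Ici a)) (hx : a < x) :
    HasDerivAt (genFracIntegral ρ 1 a h) (x ^ (ρ - 1) * h x) x := by
  have hI : genFracIntegral ρ 1 a h = fun z => ∫ τ in a..z, τ ^ (ρ - 1) * h τ := by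
    ext z; simp [genFracIntegral]
  have hc : ContinuousOn (fun τ => τ ^ (ρ - 1) * h τ) (Ici a) :=
    (continuousOn_id.rpow_const fun τ hτ => Or.inl (ha.trans_le hτ).ne').mul hh
  rw [hI]
  exact intervalIntegral.integral_hasDerivAt_right
    (hc.mono (by rw [uIcc_of_le hx.le]; exact Icc_subset_Ici_self)).intervalIntegrable
    ((hc.mono Ioi_subset_Ici_self).stronglyMeasurableAtFilter isOpen_Ioi x hx)
    (hc.continuousAt (Ici_mem_nhds hx))

theorem genFracDeriv_congr {ρ α a b x : ℝ} {f₁ f₂ : ℝ → ℝ} (h : EqOn f₁ f₂ (Icc a b))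
    (hx : x ∈ Ioo a b) : genFracDeriv ρ α a f₁ x = genFracDeriv ρ α a f₂ x := by
  rw [genFracDeriv, genFracDeriv, Filter.EventuallyEq.deriv_eq]
  filter_upwards [Ioo_mem_nhds hx.1 hx.2] with y hy
  exact genFracIntegral_congr
    (h.mono (uIcc_subset_Icc ⟨le_rfl, (hy.1.trans hy.2).le⟩ ⟨hy.1.le, hy.2.le⟩))

theorem genFracDeriv_genFracIntegral_of_continuous {α β ρ a x : ℝ} (hα0 : 0 < α) (hαβ : α < β)
    (hβ1 : β < 1) (ha : 0 < a) (hρ : 0 < ρ) {f : ℝ → ℝ} (hf : Continuous f) (hx : a < x) :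
    genFracDeriv ρ α a (genFracIntegral ρ β a f) x = genFracIntegral ρ (β - α) a f x := by
  have hsemigroup : genFracIntegral ρ (1 - α) a (genFracIntegral ρ β a f) =ᶠ[𝓝 x]
      genFracIntegral ρ 1 a (genFracIntegral ρ (β - α) a f) := by
    filter_upwards [Ici_mem_nhds hx] with y hy
    rw [genFracIntegral_genFracIntegral hρ ha.le (by linarith) (by linarith) hf hy,
      genFracIntegral_genFracIntegral hρ ha.le one_pos (by linarith) hf hy, sub_add_eq_add_sub,
      add_sub_assoc]
  have hderiv := hasDerivAt_genFracIntegral_one (ρ := ρ) ha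
    (continuousOn_genFracIntegral hρ ha.le (sub_pos.2 hαβ) hf) hx
  rw [genFracDeriv, hsemigroup.deriv_eq, hderiv.deriv, ← mul_assoc, ← rpow_add (ha.trans hx),
    sub_add_sub_cancel', sub_self, rpow_zero, one_mul]

/-- For `0 < α < β < 1`, `0 < a < b < ∞`, `ρ > 0` and `f` continuous
on `[a, b]`, the generalized fractional derivative of order `α` of the generalized
fractional integral of order `β` of `f` equals the generalized fractional integral of
order `β - α` of `f` at every `x` with `a < x < b`. -/
theorem genFracDeriv_genFracIntegral_comp (α β ρ a b : ℝ) (hα0 : 0 < α) (hαβ : α < β)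
    (hβ1 : β < 1) (ha : 0 < a) (hab : a < b) (hρ : 0 < ρ)
    (f : ℝ → ℝ) (hf : ContinuousOn f (Set.Icc a b)) :
    ∀ x : ℝ, a < x → x < b →
      genFracDeriv ρ α a (genFracIntegral ρ β a f) x =
        genFracIntegral ρ (β - α) a f x := by
  intro x hax hxb
  set F := IccExtend hab.le ((Icc a b).domRestrict f)
  have hF : Continuous F := hf.domRestrict.Icc_extend'
  have hFf : EqOn F f (Icc a b) := fun t ht => IccExtend_of_mem hab.le _ ht
  have hsub : ∀ y ∈ Icc a b, uIcc a y ⊆ Icc a b :=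
    fun y hy => uIcc_subset_Icc (left_mem_Icc.2 hab.le) hy
  rw [genFracDeriv_congr (fun y hy => genFracIntegral_congr (hFf.symm.mono (hsub y hy)))
      ⟨hax, hxb⟩,
    genFracDeriv_genFracIntegral_of_continuous hα0 hαβ hβ1 ha hρ hF hax,
    genFracIntegral_congr (hFf.mono (hsub x ⟨hax.le, hxb.le⟩))]
end

section
/- Let α > 0, ρ > 0, let s be a complex number with Re(s)/ρ > 0, and let f : (0,∞) → ℂ be such that t ↦ t^{Re(s) + αρ - 1} f(t) is integrable on (0,∞) and the Mellin transform of the function x ↦ (ρI^α_{∞-} f)(x) exists at s. Then the Mellin transform of the right-sided generalized fractional integral satisfies M[ρI^α_{∞-} f](s) = [Γ(s/ρ) / (Γ(s/ρ + α) ρ^α)] · M[f](s + αρ). -/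
open MeasureTheory Filter Real Complex

/-- The right-sided generalized (Katugampola) fractional integral of order `α`
with parameter `ρ`, of Liouville type (`b = ∞`), for a complex-valued function `f`. -/
noncomputable def genFracIntegralRight (ρ α : ℝ) (f : ℝ → ℂ) (x : ℝ) : ℂ :=
  (ρ ^ (1 - α) / Real.Gamma α) •
    ∫ τ in Set.Ioi x, (τ ^ (ρ - 1) * (τ ^ ρ - x ^ ρ) ^ (α - 1)) • f τ

/-!
Writing the Mellin transform of `ρI^α_{∞-} f` as a double integral over the triangle
`0 < x < τ` and exchanging the order of integration (Fubini; absolute convergence is exactly the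
integrability of `t^{Re s + αρ - 1} f(t)`), the inner integral is
`∫_0^τ x^{s-1} (τ^ρ - x^ρ)^{α-1} dx`. The substitutions `y = x^ρ` and `y = τ^ρ u` turn it into
`ρ⁻¹ τ^{s + αρ - ρ} B(s/ρ, α)`, and `B(s/ρ, α) = Γ(s/ρ) Γ(α) / Γ(s/ρ + α)`.
-/

open Set

namespace Complex

variable {u v : ℂ} {T : ℝ}

lemma betaIntegral_scaled_integrableOn (hu : 0 < u.re) (hv : 0 < v.re) (hT : 0 < T) :
    IntegrableOn (fun y : ℝ => (y : ℂ) ^ (u - 1) * ((T : ℂ) - y) ^ (v - 1)) (Ioo 0 T) := by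
  have h := ((betaIntegral_convergent hu hv).comp_mul_left (c := T⁻¹)).const_mul
    ((T : ℂ) ^ (u - 1) * (T : ℂ) ^ (v - 1))
  rw [zero_div, one_div, inv_inv, intervalIntegrable_iff_integrableOn_Ioo_of_le hT.le] at h
  refine h.congr_fun (fun y hy => ?_) measurableSet_Ioo
  have hy' : 0 ≤ T⁻¹ * y := by have := hy.1; positivity
  have hy'' : 0 ≤ 1 - T⁻¹ * y := by
    rw [sub_nonneg, inv_mul_le_one₀ hT]; exact hy.2.le
  have hT' : (T : ℂ) ≠ 0 := ofReal_ne_zero.mpr hT.ne'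
  dsimp only
  rw [mul_mul_mul_comm, ← mul_cpow_ofReal_nonneg hT.le hy', ← ofReal_one, ← ofReal_sub,
    ← mul_cpow_ofReal_nonneg hT.le hy'']
  push_cast
  rw [mul_inv_cancel_left₀ hT', mul_sub, mul_one, mul_inv_cancel_left₀ hT']

lemma setIntegral_Ioo_betaIntegral_scaled (hT : 0 < T) :
    ∫ y in Ioo 0 T, (y : ℂ) ^ (u - 1) * ((T : ℂ) - y) ^ (v - 1) =
      (T : ℂ) ^ (u + v - 1) * betaIntegral u v := by
  rw [← betaIntegral_scaled u v hT, intervalIntegral.integral_of_le hT.le,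
    integral_Ioc_eq_integral_Ioo]

end Complex

section Substitution

variable {E : Type*} [NormedAddCommGroup E] [NormedSpace ℝ E] {ρ τ : ℝ}

lemma image_rpow_Ioo_zero (hρ : 0 < ρ) (hτ : 0 ≤ τ) :
    (fun x : ℝ => x ^ ρ) '' Ioo 0 τ = Ioo 0 (τ ^ ρ) := by
  have h := ((continuous_rpow_const hρ.le).continuousOn (s := Icc 0 τ)).image_Ioo_of_strictMonoOn
    hτ ((strictMonoOn_rpow_Ici_of_exponent_pos hρ).mono Icc_subset_Ici_self)
  rwa [zero_rpow hρ.ne'] at h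

lemma abs_deriv_rpow_smul_eqOn (hρ : 0 < ρ) (g : ℝ → E) :
    EqOn (fun x => |ρ * x ^ (ρ - 1)| • g (x ^ ρ)) (fun x => ρ • x ^ (ρ - 1) • g (x ^ ρ))
      (Ioo 0 τ) := fun x hx => by
  dsimp only
  rw [abs_of_pos (by have := hx.1; positivity), mul_smul]

lemma integrableOn_Ioo_comp_rpow_iff (hρ : 0 < ρ) (hτ : 0 ≤ τ) (g : ℝ → E) :
    IntegrableOn (fun x => x ^ (ρ - 1) • g (x ^ ρ)) (Ioo 0 τ) ↔
      IntegrableOn g (Ioo 0 (τ ^ ρ)) := by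
  rw [← image_rpow_Ioo_zero hρ hτ, integrableOn_image_iff_integrableOn_abs_deriv_smul
    measurableSet_Ioo (fun x hx => (hasDerivAt_rpow_const (Or.inl hx.1.ne')).hasDerivWithinAt)
    (strictMonoOn_rpow_Ici_of_exponent_pos hρ |>.mono fun x hx => hx.1.le).injOn,
    integrableOn_congr_fun (abs_deriv_rpow_smul_eqOn hρ g) measurableSet_Ioo]
  exact (integrable_smul_iff hρ.ne' _).symm

lemma integral_Ioo_comp_rpow (hρ : 0 < ρ) (hτ : 0 ≤ τ) (g : ℝ → E) :
    ∫ x in Ioo 0 τ, x ^ (ρ - 1) • g (x ^ ρ) = ρ⁻¹ • ∫ y in Ioo 0 (τ ^ ρ), g y := by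
  rw [← image_rpow_Ioo_zero hρ hτ, integral_image_eq_integral_abs_deriv_smul
    measurableSet_Ioo (fun x hx => (hasDerivAt_rpow_const (Or.inl hx.1.ne')).hasDerivWithinAt)
    (strictMonoOn_rpow_Ici_of_exponent_pos hρ |>.mono fun x hx => hx.1.le).injOn,
    setIntegral_congr_fun measurableSet_Ioo (abs_deriv_rpow_smul_eqOn hρ g), integral_smul,
    inv_smul_smul₀ hρ.ne']

end Substitution

section Kernel

variable {ρ τ : ℝ} {w v : ℂ}

lemma rpow_sub_rpow_nonneg_of_mem_Ioo (hρ : 0 ≤ ρ) {x : ℝ} (hx : x ∈ Ioo 0 τ) :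
    0 ≤ τ ^ ρ - x ^ ρ :=
  sub_nonneg.2 (rpow_le_rpow hx.1.le hx.2.le hρ)

lemma ofReal_cpow_sub_one_eq_rpow_smul (hρ : ρ ≠ 0) {x : ℝ} (hx : 0 < x) (w : ℂ) :
    (x : ℂ) ^ (w - 1) = x ^ (ρ - 1) • ((x ^ ρ : ℝ) : ℂ) ^ (w / ρ - 1) := by
  have hρ' : (ρ : ℂ) ≠ 0 := ofReal_ne_zero.mpr hρ
  rw [real_smul, ofReal_cpow hx.le, ← cpow_mul_ofReal_nonneg hx.le,
    ← cpow_add _ _ (ofReal_ne_zero.mpr hx.ne')]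
  congr 1
  field_simp
  push_cast
  ring

lemma cpow_mul_rpow_sub_rpow_eqOn (hρ : ρ ≠ 0) :
    EqOn (fun x : ℝ => (x : ℂ) ^ (w - 1) * ((τ ^ ρ - x ^ ρ : ℝ) : ℂ) ^ (v - 1))
      (fun x => x ^ (ρ - 1) •
        (fun y : ℝ => (y : ℂ) ^ (w / ρ - 1) * (((τ ^ ρ : ℝ) : ℂ) - y) ^ (v - 1)) (x ^ ρ))
      (Ioo 0 τ) := fun x hx => by
  simp only [ofReal_cpow_sub_one_eq_rpow_smul hρ hx.1 w, smul_mul_assoc, ofReal_sub]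

lemma integrableOn_Ioo_cpow_mul_rpow_sub_rpow (hρ : 0 < ρ) (hτ : 0 < τ) (hw : 0 < w.re)
    (hv : 0 < v.re) :
    IntegrableOn (fun x : ℝ => (x : ℂ) ^ (w - 1) * ((τ ^ ρ - x ^ ρ : ℝ) : ℂ) ^ (v - 1))
      (Ioo 0 τ) := by
  rw [integrableOn_congr_fun (cpow_mul_rpow_sub_rpow_eqOn hρ.ne') measurableSet_Ioo]
  refine (integrableOn_Ioo_comp_rpow_iff hρ hτ.le
    (fun y : ℝ => (y : ℂ) ^ (w / ρ - 1) * (((τ ^ ρ : ℝ) : ℂ) - y) ^ (v - 1))).mpr ?_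
  exact betaIntegral_scaled_integrableOn (by rwa [div_ofReal_re, div_pos_iff_of_pos_right hρ])
    hv (by positivity)

lemma integral_Ioo_cpow_mul_rpow_sub_rpow (hρ : 0 < ρ) (hτ : 0 < τ) :
    ∫ x in Ioo 0 τ, (x : ℂ) ^ (w - 1) * ((τ ^ ρ - x ^ ρ : ℝ) : ℂ) ^ (v - 1) =
      ρ⁻¹ * (τ : ℂ) ^ (w + ρ * v - ρ) * betaIntegral (w / ρ) v := by
  have hρ' : (ρ : ℂ) ≠ 0 := ofReal_ne_zero.mpr hρ.ne'
  rw [setIntegral_congr_fun measurableSet_Ioo (cpow_mul_rpow_sub_rpow_eqOn hρ.ne'),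
    integral_Ioo_comp_rpow hρ hτ.le
      (fun y : ℝ => (y : ℂ) ^ (w / ρ - 1) * (((τ ^ ρ : ℝ) : ℂ) - y) ^ (v - 1)),
    setIntegral_Ioo_betaIntegral_scaled (by positivity), real_smul,
    ← cpow_mul_ofReal_nonneg hτ.le, ofReal_inv]
  have hexp : (ρ : ℂ) * (w / ρ + v - 1) = w + ρ * v - ρ := by field_simp
  rw [hexp, mul_assoc]

lemma integral_Ioo_rpow_mul_rpow_sub_rpow (hρ : 0 < ρ) (hτ : 0 < τ) (r a : ℝ) :
    ∫ x in Ioo 0 τ, x ^ (r - 1) * (τ ^ ρ - x ^ ρ) ^ (a - 1) =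
      ρ⁻¹ * τ ^ (r + ρ * a - ρ) * (betaIntegral (r / ρ) a).re := by
  have h := integral_Ioo_cpow_mul_rpow_sub_rpow (w := r) (v := a) hρ hτ
  have hcast : EqOn
      (fun x : ℝ => (x : ℂ) ^ ((r : ℂ) - 1) * ((τ ^ ρ - x ^ ρ : ℝ) : ℂ) ^ ((a : ℂ) - 1))
      (fun x => ((x ^ (r - 1) * (τ ^ ρ - x ^ ρ) ^ (a - 1) : ℝ) : ℂ)) (Ioo 0 τ) := fun x hx => by
    have hbase := rpow_sub_rpow_nonneg_of_mem_Ioo hρ.le hx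
    simp only [ofReal_mul, ofReal_cpow hx.1.le, ofReal_cpow hbase, ofReal_sub, ofReal_one]
  rw [setIntegral_congr_fun measurableSet_Ioo hcast, integral_complex_ofReal,
    show ((r : ℂ) + ρ * a - ρ) = ((r + ρ * a - ρ : ℝ) : ℂ) by push_cast; rfl,
    ← ofReal_cpow hτ.le, ← ofReal_mul] at h
  simpa only [ofReal_re, re_ofReal_mul] using congrArg re h

end Kernel

section Triangle

variable {E : Type*} [NormedAddCommGroup E] {G : ℝ → ℝ → E}

lemma measurableSet_triangle_s9 : MeasurableSet {p : ℝ × ℝ | 0 < p.1 ∧ p.1 < p.2} :=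
  (measurableSet_lt measurable_const measurable_fst).inter
    (measurableSet_lt measurable_fst measurable_snd)

lemma indicator_triangle_apply_eq_Ioo (x τ : ℝ) :
    {p : ℝ × ℝ | 0 < p.1 ∧ p.1 < p.2}.indicator (Function.uncurry G) (x, τ) =
      (Ioo 0 τ).indicator (G · τ) x := by
  by_cases h : 0 < x ∧ x < τ <;> simp [indicator, h]

lemma integrableOn_triangle
    (hm : AEStronglyMeasurable (Function.uncurry G)
      (volume.restrict {p : ℝ × ℝ | 0 < p.1 ∧ p.1 < p.2}))
    (hsection : ∀ τ > 0, IntegrableOn (G · τ) (Ioo 0 τ))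
    (hnorm : IntegrableOn (fun τ => ∫ x in Ioo 0 τ, ‖G x τ‖) (Ioi 0)) :
    IntegrableOn (Function.uncurry G) {p : ℝ × ℝ | 0 < p.1 ∧ p.1 < p.2} := by
  rw [← integrable_indicator_iff measurableSet_triangle_s9, Measure.volume_eq_prod,
    integrable_prod_iff' ((aestronglyMeasurable_indicator_iff measurableSet_triangle_s9).2 hm)]
  simp only [indicator_triangle_apply_eq_Ioo, norm_indicator_eq_indicator_norm,
    integral_indicator measurableSet_Ioo, integrable_indicator_iff measurableSet_Ioo]
  refine ⟨ae_of_all _ fun τ => ?_, ?_⟩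
  · rcases lt_or_ge 0 τ with hτ | hτ
    · exact hsection τ hτ
    · simp [Ioo_eq_empty_of_le hτ]
  · refine (integrableOn_iff_integrable_of_support_subset fun τ hτ => ?_).1 hnorm
    by_contra hτ'
    simp [Ioo_eq_empty (hτ' ∘ mem_Ioi.2)] at hτ

variable [NormedSpace ℝ E]

lemma integral_Ioi_integral_Ioi_eq_integral_Ioi_integral_Ioo
    (hG : IntegrableOn (Function.uncurry G) {p : ℝ × ℝ | 0 < p.1 ∧ p.1 < p.2}) :
    ∫ x in Ioi 0, ∫ τ in Ioi x, G x τ = ∫ τ in Ioi 0, ∫ x in Ioo 0 τ, G x τ := by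
  rw [← integrable_indicator_iff measurableSet_triangle_s9, Measure.volume_eq_prod] at hG
  have hinner : ∀ x,
      ∫ τ, {p : ℝ × ℝ | 0 < p.1 ∧ p.1 < p.2}.indicator (Function.uncurry G) (x, τ) =
        (Ioi 0).indicator (fun x => ∫ τ in Ioi x, G x τ) x := by
    intro x
    by_cases hx : 0 < x
    · rw [indicator_of_mem (mem_Ioi.2 hx), ← integral_indicator measurableSet_Ioi]
      congr 1 with τ
      by_cases hτ : x < τ <;> simp [indicator, hx, hτ]
    · simp [hx]
  have h := integral_integral_swap (f := fun x τ =>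
    {p : ℝ × ℝ | 0 < p.1 ∧ p.1 < p.2}.indicator (Function.uncurry G) (x, τ)) hG
  simp only [hinner] at h
  simp only [indicator_triangle_apply_eq_Ioo, integral_indicator measurableSet_Ioo,
    integral_indicator measurableSet_Ioi] at h
  rw [h, setIntegral_eq_integral_of_forall_compl_eq_zero fun τ hτ => ?_]
  simp [Ioo_eq_empty (hτ ∘ mem_Ioi.2)]

end Triangle

lemma aestronglyMeasurable_of_integrableOn_rpow_smul {E : Type*} [NormedAddCommGroup E]
    [NormedSpace ℝ E] {f : ℝ → E} {c : ℝ} (hf : IntegrableOn (fun t : ℝ => t ^ c • f t) (Ioi 0)) :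
    AEStronglyMeasurable f (volume.restrict (Ioi 0)) := by
  refine ((ContinuousOn.aestronglyMeasurable (f := fun t : ℝ => t ^ (-c)) (fun t ht => ?_)
    measurableSet_Ioi).smul hf.aestronglyMeasurable).congr
    ((ae_restrict_mem measurableSet_Ioi).mono fun t ht => ?_)
  · exact (continuousAt_rpow_const t (-c) (Or.inl (ne_of_gt ht))).continuousWithinAt
  · rw [Pi.smul_apply', smul_smul, ← rpow_add ht, neg_add_cancel, rpow_zero, one_smul]

section GenFracIntegral

variable {ρ α : ℝ} {s : ℂ} {f : ℝ → ℂ}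

noncomputable def genFracKernel (ρ α x τ : ℝ) : ℝ := τ ^ (ρ - 1) * (τ ^ ρ - x ^ ρ) ^ (α - 1)

lemma mellin_genFracIntegralRight_eq_iterated (ρ α : ℝ) (f : ℝ → ℂ) (s : ℂ) :
    mellin (genFracIntegralRight ρ α f) s = (ρ ^ (1 - α) / Real.Gamma α) •
      ∫ x in Ioi (0 : ℝ), ∫ τ in Ioi x, (x : ℂ) ^ (s - 1) • genFracKernel ρ α x τ • f τ := by
  simp only [mellin, genFracIntegralRight, genFracKernel]
  rw [← integral_smul]
  congr 1 with x
  rw [smul_comm, integral_smul]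

lemma genFracKernel_smul_eqOn (hρ : 0 < ρ) (τ : ℝ) :
    EqOn (fun x : ℝ => (x : ℂ) ^ (s - 1) • genFracKernel ρ α x τ • f τ)
      (fun x => ((x : ℂ) ^ (s - 1) * ((τ ^ ρ - x ^ ρ : ℝ) : ℂ) ^ ((α : ℂ) - 1)) *
        (τ ^ (ρ - 1) • f τ)) (Ioo 0 τ) := fun x hx => by
  have hbase := rpow_sub_rpow_nonneg_of_mem_Ioo hρ.le hx
  simp only [genFracKernel, real_smul, ofReal_mul, ofReal_cpow hbase, smul_eq_mul]
  push_cast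
  ring

lemma integral_Ioo_genFracKernel_smul (hρ : 0 < ρ) {τ : ℝ} (hτ : 0 < τ) :
    ∫ x in Ioo 0 τ, (x : ℂ) ^ (s - 1) • genFracKernel ρ α x τ • f τ =
      (ρ⁻¹ * betaIntegral (s / ρ) α) * ((τ : ℂ) ^ (s + α * ρ - 1) • f τ) := by
  rw [setIntegral_congr_fun measurableSet_Ioo (genFracKernel_smul_eqOn hρ τ), integral_mul_const,
    integral_Ioo_cpow_mul_rpow_sub_rpow hρ hτ, real_smul, smul_eq_mul, ofReal_cpow hτ.le]
  have hpow : (τ : ℂ) ^ (s + ρ * α - ρ) * (τ : ℂ) ^ ((ρ - 1 : ℝ) : ℂ) =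
      (τ : ℂ) ^ (s + α * ρ - 1) := by
    rw [← cpow_add _ _ (ofReal_ne_zero.2 hτ.ne')]
    push_cast
    ring_nf
  rw [← hpow]
  ring

lemma integral_Ioo_norm_genFracKernel_smul (hρ : 0 < ρ) {τ : ℝ} (hτ : 0 < τ) :
    ∫ x in Ioo 0 τ, ‖(x : ℂ) ^ (s - 1) • genFracKernel ρ α x τ • f τ‖ =
      (ρ⁻¹ * (betaIntegral (s.re / ρ) α).re) * ‖τ ^ (s.re + α * ρ - 1) • f τ‖ := by
  have hnorm : EqOn (fun x : ℝ => ‖(x : ℂ) ^ (s - 1) • genFracKernel ρ α x τ • f τ‖)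
      (fun x => x ^ (s.re - 1) * (τ ^ ρ - x ^ ρ) ^ (α - 1) * (τ ^ (ρ - 1) * ‖f τ‖))
      (Ioo 0 τ) := fun x hx => by
    have hbase := rpow_sub_rpow_nonneg_of_mem_Ioo hρ.le hx
    dsimp only
    rw [norm_smul, norm_smul, norm_cpow_eq_rpow_re_of_pos hx.1, sub_re, one_re,
      Real.norm_of_nonneg (by unfold genFracKernel; positivity), genFracKernel]
    ring
  have hpow : τ ^ (s.re + ρ * α - ρ) * τ ^ (ρ - 1) = τ ^ (s.re + α * ρ - 1) := by
    rw [← rpow_add hτ]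
    ring_nf
  rw [setIntegral_congr_fun measurableSet_Ioo hnorm, integral_mul_const,
    integral_Ioo_rpow_mul_rpow_sub_rpow hρ hτ, norm_smul, Real.norm_of_nonneg (by positivity),
    ← hpow]
  ring

lemma integrableOn_triangle_genFracKernel_smul (hα : 0 < α) (hρ : 0 < ρ) (hs : 0 < s.re)
    (hf : IntegrableOn (fun t : ℝ => t ^ (s.re + α * ρ - 1) • f t) (Ioi 0)) :
    IntegrableOn (Function.uncurry fun x τ : ℝ => (x : ℂ) ^ (s - 1) • genFracKernel ρ α x τ • f τ)
      {p : ℝ × ℝ | 0 < p.1 ∧ p.1 < p.2} := by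
  refine integrableOn_triangle ?_ (fun τ hτ => ?_) ?_
  · have hf_snd := (aestronglyMeasurable_of_integrableOn_rpow_smul hf).comp_quasiMeasurePreserving
      (Measure.quasiMeasurePreserving_snd (μ := volume.restrict (Ioi (0 : ℝ))))
    rw [Measure.prod_restrict, ← Measure.volume_eq_prod] at hf_snd
    have hkernel : Measurable fun p : ℝ × ℝ => genFracKernel ρ α p.1 p.2 := by
      unfold genFracKernel; fun_prop
    have hsub : {p : ℝ × ℝ | 0 < p.1 ∧ p.1 < p.2} ⊆ Ioi 0 ×ˢ Ioi 0 :=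
      fun p hp => ⟨hp.1, hp.1.trans hp.2⟩
    exact ((measurable_ofReal.comp measurable_fst).pow_const _).aestronglyMeasurable.smul
      (hkernel.aestronglyMeasurable.smul
        (hf_snd.mono_measure (Measure.restrict_mono hsub le_rfl)))
  · exact IntegrableOn.congr_fun ((integrableOn_Ioo_cpow_mul_rpow_sub_rpow (v := α) hρ hτ hs
      (by simpa using hα)).mul_const _) (genFracKernel_smul_eqOn hρ τ).symm measurableSet_Ioo
  · exact IntegrableOn.congr_fun (hf.norm.const_mul (ρ⁻¹ * (betaIntegral (s.re / ρ) α).re))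
      (fun τ hτ => (integral_Ioo_norm_genFracKernel_smul hρ hτ).symm) measurableSet_Ioi

lemma ofReal_rpow_div_Gamma_mul_betaIntegral (hα : 0 < α) (hρ : 0 < ρ) (hs : 0 < s.re) :
    ((ρ ^ (1 - α) / Real.Gamma α : ℝ) : ℂ) * (ρ⁻¹ * betaIntegral (s / ρ) α) =
      Gamma (s / ρ) / (Gamma (s / ρ + α) * (ρ : ℂ) ^ (α : ℂ)) := by
  have hsρ : 0 < (s / ρ).re := by rw [div_ofReal_re]; exact div_pos hs hρ
  have hα' : 0 < (α : ℂ).re := by rwa [ofReal_re]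
  have hρ' : (ρ : ℂ) ≠ 0 := ofReal_ne_zero.2 hρ.ne'
  have hΓα : Gamma (α : ℂ) ≠ 0 := Gamma_ne_zero_of_re_pos hα'
  have hΓsα : Gamma (s / ρ + α) ≠ 0 :=
    Gamma_ne_zero_of_re_pos (by rw [add_re]; exact add_pos hsρ hα')
  have hB : betaIntegral (s / ρ) α = Gamma (s / ρ) * Gamma (α : ℂ) / Gamma (s / ρ + α) := by
    rw [eq_div_iff hΓsα, Gamma_mul_Gamma_eq_betaIntegral hsρ hα', mul_comm]
  have hpow : ((ρ ^ (1 - α) : ℝ) : ℂ) = ρ / (ρ : ℂ) ^ (α : ℂ) := by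
    rw [ofReal_cpow hρ.le, ofReal_sub, ofReal_one, cpow_sub _ _ hρ', cpow_one]
  rw [ofReal_div, hpow, ← Gamma_ofReal, hB, ofReal_inv]
  field_simp

end GenFracIntegral

theorem mellin_genFracIntegralRight_general (α ρ : ℝ) (s : ℂ) (hα : 0 < α) (hρ : 0 < ρ)
    (hs : 0 < s.re / ρ) (f : ℝ → ℂ)
    (hf : IntegrableOn (fun t : ℝ => t ^ (s.re + α * ρ - 1) • f t) (Set.Ioi 0)) :
    mellin (genFracIntegralRight ρ α f) s =
      (Complex.Gamma (s / ρ) / (Complex.Gamma (s / ρ + α) * (ρ : ℂ) ^ (α : ℂ))) *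
        mellin f (s + (α : ℂ) * (ρ : ℂ)) := by
  have hs' : 0 < s.re := (div_pos_iff_of_pos_right hρ).1 hs
  rw [mellin_genFracIntegralRight_eq_iterated,
    integral_Ioi_integral_Ioi_eq_integral_Ioi_integral_Ioo
      (integrableOn_triangle_genFracKernel_smul hα hρ hs' hf),
    setIntegral_congr_fun measurableSet_Ioi fun τ hτ => integral_Ioo_genFracKernel_smul hρ hτ,
    integral_const_mul, real_smul, ← mul_assoc, ofReal_rpow_div_Gamma_mul_betaIntegral hα hρ hs']
  rfl

/-- For `α > 0`, `ρ > 0` and `s : ℂ` with `Re(s)/ρ > 0`, if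
`t ↦ t^{Re(s)+αρ-1} f(t)` is integrable on `(0,∞)` and the Mellin transform of
`ρI^α_{∞-} f` exists at `s`, then
`M[ρI^α_{∞-} f](s) = [Γ(s/ρ)/(Γ(s/ρ + α) ρ^α)] M[f](s + αρ)`. -/
theorem mellin_genFracIntegralRight (α ρ : ℝ) (s : ℂ) (hα : 0 < α) (hρ : 0 < ρ)
    (hs : 0 < s.re / ρ) (f : ℝ → ℂ)
    (hf : IntegrableOn (fun t : ℝ => t ^ (s.re + α * ρ - 1) • f t) (Set.Ioi 0))
    (hM : MellinConvergent (genFracIntegralRight ρ α f) s) :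
    mellin (genFracIntegralRight ρ α f) s =
      (Complex.Gamma (s / ρ) / (Complex.Gamma (s / ρ + α) * (ρ : ℂ) ^ (α : ℂ))) *
        mellin f (s + (α : ℂ) * (ρ : ℂ)) :=
  mellin_genFracIntegralRight_general α ρ s hα hρ hs f hf
end

section
/- Let a and b be real numbers. Then Γ(x + a)/Γ(x + b) is asymptotic to x^{a-b} as x → ∞; that is, lim_{x→∞} Γ(x + a) / (Γ(x + b) · x^{a-b}) = 1. -/
open Filter Real

open Asymptotics Topology

/-
Wendel's argument. Log-convexity of `Γ` between `x` and `x + 1` and between `x + s` and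
`x + s + 1` squeezes `Γ(x + s) / (Γ(x) x^s)` between `(x / (x + s))^(1 - s)` and `1` for
`0 ≤ s ≤ 1`, so `Γ(x + s) ~ Γ(x) x^s`. The recurrence `Γ(y + 1) = y Γ(y)` together with
`x + c ~ x` shows that this equivalence for `c` and for `c + 1` are the same statement, so it
holds for every real `c`; the theorem is the quotient of the cases `c = a` and `c = b`.
-/

theorem Asymptotics.IsEquivalent.mul_iff_of_eventually_ne_zero {α β : Type*} [NormedField β]
    {l : Filter α} {t u v w : α → β} (htu : t ~[l] u) (ht : ∀ᶠ x in l, t x ≠ 0)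
    (hu : ∀ᶠ x in l, u x ≠ 0) : t * v ~[l] u * w ↔ v ~[l] w := by
  refine ⟨fun h => ?_, htu.mul⟩
  have hv : t * v / t =ᶠ[l] v := ht.mono fun x hx => mul_div_cancel_left₀ (v x) hx
  have hw : u * w / u =ᶠ[l] w := hu.mono fun x hx => mul_div_cancel_left₀ (w x) hx
  exact ((h.div htu).congr_left hv).congr_right hw

theorem isEquivalent_add_const_id (c : ℝ) : (fun x : ℝ => x + c) ~[atTop] id :=
  IsEquivalent.refl.add_const_of_norm_tendsto_atTop tendsto_norm_atTop_atTop

namespace Real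

theorem Gamma_mul_add_mul_le_rpow_Gamma_mul_rpow_Gamma_of_nonneg {s t a b : ℝ} (hs : 0 < s)
    (ht : 0 < t) (ha : 0 ≤ a) (hb : 0 ≤ b) (hab : a + b = 1) :
    Gamma (a * s + b * t) ≤ Gamma s ^ a * Gamma t ^ b := by
  have hlog : log (Gamma (a * s + b * t)) ≤ a * log (Gamma s) + b * log (Gamma t) :=
    convexOn_log_Gamma.2 (Set.mem_Ioi.2 hs) (Set.mem_Ioi.2 ht) ha hb hab
  have hpos : 0 < Gamma (a * s + b * t) :=
    Gamma_pos_of_pos (convex_Ioi 0 (Set.mem_Ioi.2 hs) (Set.mem_Ioi.2 ht) ha hb hab)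
  calc Gamma (a * s + b * t) = exp (log (Gamma (a * s + b * t))) := (exp_log hpos).symm
    _ ≤ exp (a * log (Gamma s) + b * log (Gamma t)) := exp_le_exp.2 hlog
    _ = Gamma s ^ a * Gamma t ^ b := by
      rw [exp_add, rpow_def_of_pos (Gamma_pos_of_pos hs), rpow_def_of_pos (Gamma_pos_of_pos ht),
        mul_comm a, mul_comm b]

variable {x s : ℝ}

theorem Gamma_add_le_Gamma_mul_rpow (hx : 0 < x) (hs₀ : 0 ≤ s) (hs₁ : s ≤ 1) :
    Gamma (x + s) ≤ Gamma x * x ^ s := by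
  have hG := Gamma_pos_of_pos hx
  calc Gamma (x + s) = Gamma ((1 - s) * x + s * (x + 1)) := by ring_nf
    _ ≤ Gamma x ^ (1 - s) * Gamma (x + 1) ^ s :=
      Gamma_mul_add_mul_le_rpow_Gamma_mul_rpow_Gamma_of_nonneg hx (by linarith) (by linarith)
        hs₀ (by ring)
    _ = Gamma x ^ (1 - s) * Gamma x ^ s * x ^ s := by
      rw [Gamma_add_one hx.ne', mul_rpow hx.le hG.le]; ring
    _ = Gamma x * x ^ s := by rw [← rpow_add hG, sub_add_cancel, rpow_one]

theorem mul_Gamma_le_Gamma_add_mul_rpow (hx : 0 < x) (hs₀ : 0 ≤ s) (hs₁ : s ≤ 1) :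
    x * Gamma x ≤ Gamma (x + s) * (x + s) ^ (1 - s) := by
  have hxs : 0 < x + s := by linarith
  have hG := Gamma_pos_of_pos hxs
  calc x * Gamma x = Gamma (s * (x + s) + (1 - s) * (x + s + 1)) := by
        rw [← Gamma_add_one hx.ne']; ring_nf
    _ ≤ Gamma (x + s) ^ s * Gamma (x + s + 1) ^ (1 - s) :=
      Gamma_mul_add_mul_le_rpow_Gamma_mul_rpow_Gamma_of_nonneg hxs (by linarith) hs₀
        (by linarith) (by ring)
    _ = Gamma (x + s) ^ s * Gamma (x + s) ^ (1 - s) * (x + s) ^ (1 - s) := by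
      rw [Gamma_add_one hxs.ne', mul_rpow hxs.le hG.le]; ring
    _ = Gamma (x + s) * (x + s) ^ (1 - s) := by rw [← rpow_add hG, add_sub_cancel, rpow_one]

theorem isEquivalent_Gamma_add_of_mem_Icc (hs₀ : 0 ≤ s) (hs₁ : s ≤ 1) :
    (fun x => Gamma (x + s)) ~[atTop] fun x => Gamma x * x ^ s := by
  have hratio : Tendsto (fun x : ℝ => x / (x + s)) atTop (𝓝 1) :=
    (isEquivalent_iff_tendsto_one ((eventually_gt_atTop (-s)).mono fun x hx => by
      change x + s ≠ 0; linarith)).1 (isEquivalent_add_const_id s).symm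
  have hlower : Tendsto (fun x : ℝ => (x / (x + s)) ^ (1 - s)) atTop (𝓝 1) := by
    simpa using hratio.rpow_const (p := 1 - s) (Or.inl one_ne_zero)
  refine isEquivalent_of_tendsto_one
    (tendsto_of_tendsto_of_tendsto_of_le_of_le' hlower tendsto_const_nhds ?_ ?_)
  · filter_upwards [eventually_gt_atTop 0] with x hx
    have hxs : 0 < x + s := by linarith
    rw [Pi.div_apply, le_div_iff₀ (mul_pos (Gamma_pos_of_pos hx) (rpow_pos_of_pos hx s)),
      div_rpow hx.le hxs.le, div_mul_eq_mul_div, div_le_iff₀ (rpow_pos_of_pos hxs _)]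
    calc x ^ (1 - s) * (Gamma x * x ^ s) = x * Gamma x := by
          rw [mul_left_comm, ← rpow_add hx, sub_add_cancel, rpow_one, mul_comm]
      _ ≤ Gamma (x + s) * (x + s) ^ (1 - s) := mul_Gamma_le_Gamma_add_mul_rpow hx hs₀ hs₁
  · filter_upwards [eventually_gt_atTop 0] with x hx
    exact (div_le_one (mul_pos (Gamma_pos_of_pos hx) (rpow_pos_of_pos hx s))).2
      (Gamma_add_le_Gamma_mul_rpow hx hs₀ hs₁)

theorem isEquivalent_Gamma_add_add_one_iff (c : ℝ) :
    ((fun x => Gamma (x + (c + 1))) ~[atTop] fun x => Gamma x * x ^ (c + 1)) ↔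
      (fun x => Gamma (x + c)) ~[atTop] fun x => Gamma x * x ^ c := by
  have hleft : (fun x => Gamma (x + (c + 1))) =ᶠ[atTop]
      (fun x => x + c) * fun x => Gamma (x + c) :=
    (eventually_gt_atTop (-c)).mono fun x hx => by
      change Gamma (x + (c + 1)) = (x + c) * Gamma (x + c)
      rw [← add_assoc, Gamma_add_one (by linarith)]
  have hright : (fun x => Gamma x * x ^ (c + 1)) =ᶠ[atTop] id * fun x => Gamma x * x ^ c :=
    (eventually_gt_atTop 0).mono fun x hx => by
      change Gamma x * x ^ (c + 1) = x * (Gamma x * x ^ c)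
      rw [rpow_add_one hx.ne']; ring
  refine Iff.trans ⟨fun h => (h.congr_left hleft).congr_right hright,
    fun h => (h.congr_left hleft.symm).congr_right hright.symm⟩ ?_
  exact (isEquivalent_add_const_id c).mul_iff_of_eventually_ne_zero
    ((eventually_gt_atTop (-c)).mono fun x hx => by change x + c ≠ 0; linarith)
    ((eventually_gt_atTop 0).mono fun x hx => hx.ne')

theorem isEquivalent_Gamma_add (c : ℝ) :
    (fun x => Gamma (x + c)) ~[atTop] fun x => Gamma x * x ^ c := by
  have hfract := isEquivalent_Gamma_add_of_mem_Icc (Int.fract_nonneg c) (Int.fract_lt_one c).le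
  have hshift : ∀ n : ℤ, (fun x => Gamma (x + (Int.fract c + n))) ~[atTop]
      fun x => Gamma x * x ^ (Int.fract c + n) := by
    intro n
    induction n using Int.induction_on with
    | zero => simpa using hfract
    | succ k ih =>
      rwa [Int.cast_add, Int.cast_one, ← add_assoc, isEquivalent_Gamma_add_add_one_iff]
    | pred k ih =>
      have hk : Int.fract c + ((-k - 1 : ℤ) : ℝ) + 1 = Int.fract c + ((-k : ℤ) : ℝ) := by
        push_cast; ring
      rwa [← isEquivalent_Gamma_add_add_one_iff, hk]
  simpa only [Int.fract_add_floor] using hshift ⌊c⌋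

end Real

/-- For real `a` and `b`, `Γ(x + a)/Γ(x + b)` is asymptotic to
`x^{a-b}` as `x → ∞`: `lim_{x→∞} Γ(x + a)/(Γ(x + b) · x^{a-b}) = 1`. -/
theorem gamma_ratio_asymptotic (a b : ℝ) :
    Tendsto
      (fun x : ℝ => Real.Gamma (x + a) / (Real.Gamma (x + b) * x ^ (a - b)))
      atTop (nhds 1) := by
  have hsplit : (fun x => Gamma x * x ^ a) =ᶠ[atTop]
      (fun x => Gamma x * x ^ b) * fun x => x ^ (a - b) :=
    (eventually_gt_atTop 0).mono fun x hx => by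
      rw [Pi.mul_apply, mul_assoc, ← rpow_add hx, add_sub_cancel]
  have hequiv : (fun x => Gamma (x + a)) ~[atTop] fun x => Gamma (x + b) * x ^ (a - b) :=
    ((isEquivalent_Gamma_add a).congr_right hsplit).trans
      ((isEquivalent_Gamma_add b).symm.mul IsEquivalent.refl)
  have hne : ∀ᶠ x in atTop, Gamma (x + b) * x ^ (a - b) ≠ 0 := by
    filter_upwards [eventually_gt_atTop 0, eventually_gt_atTop (-b)] with x hx hxb
    exact (mul_pos (Gamma_pos_of_pos (by linarith)) (rpow_pos_of_pos hx _)).ne'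
  exact (isEquivalent_iff_tendsto_one hne).1 hequiv
end
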